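/- arXiv:1209.1002 — 5 statements merged into one kernel-verified Lean document; each statement's English description precedes it below -/
import Mathlib

section
/- Let K be a field, δ ∈ K and n ≥ 1. If p ∈ TL_n(K, δ) satisfies (i) p − 1 lies in the two-sided ideal generated by e_1, …, e_{n−1} and (ii) e_i * p = 0 for all i = 1, …, n−1, then p is idempotent: p * p = p. -/
/-- The Temperley–Lieb relations on the free algebra on `n - 1` generators:
`eᵢ² = δ·eᵢ`, `eᵢeⱼeᵢ = eᵢ` for `|i - j| = 1`, and `eᵢeⱼ = eⱼeᵢ` for `|i - j| ≥ 2`. -/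
inductive TLRel (K : Type*) [Field K] (δ : K) (n : ℕ) :
    FreeAlgebra K (Fin (n - 1)) → FreeAlgebra K (Fin (n - 1)) → Prop
  | square (i : Fin (n - 1)) :
      TLRel K δ n (FreeAlgebra.ι K i * FreeAlgebra.ι K i) (δ • FreeAlgebra.ι K i)
  | adjacent (i j : Fin (n - 1)) (h : (i : ℕ) + 1 = j ∨ (j : ℕ) + 1 = i) :
      TLRel K δ n (FreeAlgebra.ι K i * FreeAlgebra.ι K j * FreeAlgebra.ι K i)
        (FreeAlgebra.ι K i)
  | distant (i j : Fin (n - 1)) (h : (i : ℕ) + 2 ≤ j ∨ (j : ℕ) + 2 ≤ i) :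
      TLRel K δ n (FreeAlgebra.ι K i * FreeAlgebra.ι K j)
        (FreeAlgebra.ι K j * FreeAlgebra.ι K i)

/-- The Temperley–Lieb algebra `TL_n(K, δ)`. -/
abbrev TL (K : Type*) [Field K] (δ : K) (n : ℕ) : Type _ := RingQuot (TLRel K δ n)

/-- The generator `e_i` of the Temperley–Lieb algebra `TL_n(K, δ)`
(indices `i : Fin (n - 1)` correspond to `e_1, …, e_{n-1}`). -/
noncomputable def TLe (K : Type*) [Field K] (δ : K) (n : ℕ) (i : Fin (n - 1)) :
    TL K δ n :=
  RingQuot.mkAlgHom K (TLRel K δ n) (FreeAlgebra.ι K i)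

/-- The generators generate `TL_n` as a `K`-algebra. -/
lemma TL_adjoin_eq_top (K : Type*) [Field K] (δ : K) (n : ℕ) :
    Algebra.adjoin K (Set.range (TLe K δ n)) = ⊤ := by
  have : Set.range (TLe K δ n) =
      RingQuot.mkAlgHom K (TLRel K δ n) '' Set.range (FreeAlgebra.ι K) := by
    rw [← Set.range_comp]; rfl
  rw [this, ← AlgHom.map_adjoin, FreeAlgebra.adjoin_range_ι, Algebra.map_top,
    AlgHom.range_eq_top]
  exact RingQuot.mkAlgHom_surjective K _

/-- If `p ∈ TL_n(K, δ)` satisfies `p - 1 ∈ (e_1, …, e_{n-1})` (the two-sided ideal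
generated by the generators) and `e_i * p = 0` for all `i`, then `p` is idempotent. -/
theorem TL_jones_wenzl_idempotent (K : Type*) [Field K] (δ : K) (n : ℕ) (hn : 1 ≤ n)
    (p : TL K δ n)
    (h1 : p - 1 ∈ TwoSidedIdeal.span (Set.range (TLe K δ n)))
    (h2 : ∀ i : Fin (n - 1), TLe K δ n i * p = 0) :
    p * p = p := by
  -- Every `r` satisfies `r * p = c • p` for some scalar `c`.
  have key : ∀ r : TL K δ n, ∃ c : K, r * p = c • p := by
    intro r
    have hr : r ∈ Algebra.adjoin K (Set.range (TLe K δ n)) := by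
      rw [TL_adjoin_eq_top]; trivial
    induction hr using Algebra.adjoin_induction with
    | mem x hx =>
      obtain ⟨i, rfl⟩ := hx
      exact ⟨0, by rw [h2 i, zero_smul]⟩
    | algebraMap c =>
      exact ⟨c, by rw [Algebra.algebraMap_eq_smul_one, smul_mul_assoc, one_mul]⟩
    | add x y _ _ hx hy =>
      obtain ⟨c, hc⟩ := hx; obtain ⟨d, hd⟩ := hy
      exact ⟨c + d, by rw [add_mul, hc, hd, add_smul]⟩
    | mul x y _ _ hx hy =>
      obtain ⟨c, hc⟩ := hx; obtain ⟨d, hd⟩ := hy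
      exact ⟨d * c, by rw [mul_assoc, hd, mul_smul_comm, hc, smul_smul]⟩
  -- The set of elements killing `p` on the right is a two-sided ideal.
  set J : TwoSidedIdeal (TL K δ n) := TwoSidedIdeal.mk' {x | x * p = 0}
    (by simp)
    (fun {x y} hx hy => by simp only [Set.mem_setOf_eq] at *; rw [add_mul, hx, hy, add_zero])
    (fun {x} hx => show -x * p = 0 by
      have hx' : x * p = 0 := hx
      have : -x * p = -(x * p) := neg_mul x p
      rw [this, hx', neg_zero])
    (fun {x y} hy => by
      simp only [Set.mem_setOf_eq] at *; rw [mul_assoc, hy, mul_zero])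
    (fun {x y} hx => by
      simp only [Set.mem_setOf_eq] at *
      obtain ⟨c, hc⟩ := key y
      rw [mul_assoc, hc, mul_smul_comm, hx, smul_zero]) with hJ
  have hmem : p - 1 ∈ J := by
    refine TwoSidedIdeal.mem_span_iff.mp h1 J ?_
    rintro x ⟨i, rfl⟩
    rw [hJ, SetLike.mem_coe, TwoSidedIdeal.mem_mk']
    exact h2 i
  rw [hJ, TwoSidedIdeal.mem_mk'] at hmem
  have : (p - 1) * p = 0 := hmem
  rw [sub_mul, one_mul, sub_eq_zero] at this
  exact this
end

section
/- Let K be a field, δ ∈ K and n ≥ 1, and define the quantum integers [k] ∈ K by [0] = 0, [1] = 1 and [k+1] = δ·[k] − [k−1]. If [k] ≠ 0 for all k with 2 ≤ k ≤ n, then there exists a Jones–Wenzl projector in TL_n(K, δ): an element p with p − 1 in the two-sided ideal generated by e_1, …, e_{n−1} and e_i * p = p * e_i = 0 for all i = 1, …, n−1. -/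
/-- The quantum integers `[k] ∈ K` associated to `δ`:
`[0] = 0`, `[1] = 1`, `[k+1] = δ·[k] − [k−1]`. -/
def qint {K : Type*} [Field K] (δ : K) : ℕ → K
  | 0 => 0
  | 1 => 1
  | (k + 2) => δ * qint δ (k + 1) - qint δ k

lemma TLe_sq (K : Type*) [Field K] (δ : K) (n : ℕ) (i : Fin (n-1)) :
    TLe K δ n i * TLe K δ n i = δ • TLe K δ n i := by
  unfold TLe
  rw [← map_mul, ← map_smul]
  exact RingQuot.mkAlgHom_rel K (TLRel.square i)

lemma TLe_adj (K : Type*) [Field K] (δ : K) (n : ℕ) (i j : Fin (n-1))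
    (h : (i:ℕ)+1 = j ∨ (j:ℕ)+1 = i) :
    TLe K δ n i * TLe K δ n j * TLe K δ n i = TLe K δ n i := by
  unfold TLe
  rw [← map_mul, ← map_mul]
  exact RingQuot.mkAlgHom_rel K (TLRel.adjacent i j h)

lemma TLe_comm (K : Type*) [Field K] (δ : K) (n : ℕ) (i j : Fin (n-1))
    (h : (i:ℕ)+2 ≤ j ∨ (j:ℕ)+2 ≤ i) :
    TLe K δ n i * TLe K δ n j = TLe K δ n j * TLe K δ n i := by
  unfold TLe
  rw [← map_mul, ← map_mul]
  exact RingQuot.mkAlgHom_rel K (TLRel.distant i j h)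

noncomputable def TLE (K : Type*) [Field K] (δ : K) (n : ℕ) (m : ℕ) : TL K δ n :=
  if h : m < n - 1 then TLe K δ n ⟨m, h⟩ else 0

noncomputable def jw (K : Type*) [Field K] (δ : K) (n : ℕ) : ℕ → TL K δ n
  | 0 => 1
  | (m+1) => jw K δ n m - (qint δ (m+1) / qint δ (m+2)) •
      (jw K δ n m * TLE K δ n m * jw K δ n m)

lemma jw_succ (K : Type*) [Field K] (δ : K) (n : ℕ) (m : ℕ) :
    jw K δ n (m+1) = jw K δ n m - (qint δ (m+1) / qint δ (m+2)) •
      (jw K δ n m * TLE K δ n m * jw K δ n m) := rfl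

lemma TLE_sq (K : Type*) [Field K] (δ : K) (n : ℕ) (m : ℕ) :
    TLE K δ n m * TLE K δ n m = δ • TLE K δ n m := by
  unfold TLE
  split
  · exact TLe_sq K δ n _
  · simp

lemma TLE_comm (K : Type*) [Field K] (δ : K) (n : ℕ) (m : ℕ) (j : Fin (n-1))
    (hj : m + 2 ≤ (j:ℕ)) :
    TLE K δ n m * TLe K δ n j = TLe K δ n j * TLE K δ n m := by
  unfold TLE
  split
  · exact TLe_comm K δ n _ j (Or.inl hj)
  · simp

lemma qint_two (K : Type*) [Field K] (δ : K) : qint δ 2 = δ := by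
  show δ * qint δ 1 - qint δ 0 = δ
  simp [qint]
lemma jw_spec (K : Type*) [Field K] (δ : K) (n : ℕ) (hn : 1 ≤ n)
    (hq : ∀ k, 1 ≤ k → k ≤ n → qint δ k ≠ 0) :
    ∀ m, m ≤ n - 1 →
    (∀ i : Fin (n-1), (i:ℕ) < m →
        TLe K δ n i * jw K δ n m = 0 ∧ jw K δ n m * TLe K δ n i = 0) ∧
    jw K δ n m * jw K δ n m = jw K δ n m ∧
    (∀ j : Fin (n-1), m + 1 ≤ (j:ℕ) →
        TLe K δ n j * jw K δ n m = jw K δ n m * TLe K δ n j) ∧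
    (TLE K δ n m * jw K δ n m * TLE K δ n m * jw K δ n m
        = (qint δ (m+2) / qint δ (m+1)) • (TLE K δ n m * jw K δ n m) ∧
      jw K δ n m * TLE K δ n m * jw K δ n m * TLE K δ n m
        = (qint δ (m+2) / qint δ (m+1)) • (jw K δ n m * TLE K δ n m)) := by
  intro m
  induction m with
  | zero =>
    intro _
    refine ⟨fun i hi => absurd hi (Nat.not_lt_zero _), ?_, fun j _ => ?_, ?_, ?_⟩
    · show (1 : TL K δ n) * 1 = 1; simp
    · show TLe K δ n j * 1 = 1 * TLe K δ n j; simp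
    · show TLE K δ n 0 * 1 * TLE K δ n 0 * 1
        = (qint δ 2 / qint δ 1) • (TLE K δ n 0 * 1)
      simp [TLE_sq, qint_two, qint]
    · show (1 : TL K δ n) * TLE K δ n 0 * 1 * TLE K δ n 0
        = (qint δ 2 / qint δ 1) • (1 * TLE K δ n 0)
      simp [TLE_sq, qint_two, qint]
  | succ m ih =>
    intro hm
    obtain ⟨A, B, D, C1, C2⟩ := ih (Nat.le_of_succ_le hm)
    set P := jw K δ n m with hP
    set E := TLE K δ n m with hE
    set c := qint δ (m+1) / qint δ (m+2) with hc
    have h1 : qint δ (m+1) ≠ 0 := hq _ (by omega) (by omega)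
    have h2 : qint δ (m+2) ≠ 0 := hq _ (by omega) (by omega)
    have hcβ : c * (qint δ (m+2) / qint δ (m+1)) = 1 := by
      rw [hc]; field_simp
    have hQdef : jw K δ n (m+1) = P - c • (P * E * P) := jw_succ K δ n m
    set Q := jw K δ n (m+1) with hQ
    -- the new generator kills Q on both sides
    have hEQ : E * Q = 0 := by
      rw [hQdef, mul_sub, mul_smul_comm, ← mul_assoc, ← mul_assoc, C1,
        smul_smul, hcβ, one_smul, sub_self]
    have hQE : Q * E = 0 := by
      rw [hQdef, sub_mul, smul_mul_assoc, mul_assoc, mul_assoc, ← mul_assoc P E,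
        ← mul_assoc, C2, smul_smul, hcβ, one_smul, sub_self]
    have hPQ : P * Q = Q := by
      rw [hQdef, mul_sub, mul_smul_comm, ← mul_assoc, ← mul_assoc, B]
    have hQP : Q * P = Q := by
      rw [hQdef, sub_mul, smul_mul_assoc, mul_assoc, mul_assoc, B, ← mul_assoc]
    have hBB : Q * Q = Q := by
      nth_rewrite 2 [hQdef]
      rw [mul_sub, mul_smul_comm, ← mul_assoc, ← mul_assoc, hQP, hQE,
        zero_mul, smul_zero, sub_zero]
    refine ⟨?_, hBB, ?_, ?_⟩
    · -- A
      intro i hi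
      rcases Nat.lt_or_ge (i : ℕ) m with hlt | hge
      · obtain ⟨z1, z2⟩ := A i hlt
        constructor
        · rw [hQdef, mul_sub, mul_smul_comm, ← mul_assoc, ← mul_assoc, z1,
            zero_mul, zero_mul, smul_zero, sub_zero]
        · rw [hQdef, sub_mul, smul_mul_assoc, mul_assoc (P*E) P, z2,
            mul_zero, smul_zero, sub_zero]
      · have him : (i : ℕ) = m := by omega
        have hm' : m < n - 1 := him ▸ i.2
        have hEi : TLe K δ n i = E := by
          rw [hE]; unfold TLE; rw [dif_pos hm']
          congr 1
          exact Fin.ext him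
        rw [hEi]
        exact ⟨hEQ, hQE⟩
    · -- D
      intro j hj
      have hDj : TLe K δ n j * P = P * TLe K δ n j := D j (by omega)
      have hEj : E * TLe K δ n j = TLe K δ n j * E := TLE_comm K δ n m j (by omega)
      have key : TLe K δ n j * (P * E * P) = (P * E * P) * TLe K δ n j := by
        calc TLe K δ n j * (P * E * P) = ((TLe K δ n j * P) * E) * P := by
              rw [← mul_assoc, ← mul_assoc]
          _ = ((P * TLe K δ n j) * E) * P := by rw [hDj]
          _ = (P * (TLe K δ n j * E)) * P := by rw [mul_assoc P]
          _ = (P * (E * TLe K δ n j)) * P := by rw [hEj]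
          _ = (P * E) * (TLe K δ n j * P) := by rw [← mul_assoc, mul_assoc (P*E)]
          _ = (P * E) * (P * TLe K δ n j) := by rw [hDj]
          _ = (P * E * P) * TLe K δ n j := by rw [← mul_assoc]
      rw [hQdef, mul_sub, sub_mul, hDj, mul_smul_comm, smul_mul_assoc, key]
    · -- C at m+1
      by_cases h : m + 1 < n - 1
      · set E' := TLe K δ n ⟨m+1, h⟩ with hE'
        have hE'def : TLE K δ n (m+1) = E' := by unfold TLE; rw [dif_pos h]
        have hm' : m < n - 1 := by omega
        have hEm : E = TLe K δ n ⟨m, hm'⟩ := by rw [hE]; unfold TLE; rw [dif_pos hm']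
        have s1 : E' * P = P * E' := D ⟨m+1, h⟩ (le_refl _)
        have s2 : E' * E * E' = E' := by
          rw [hEm]; exact TLe_adj K δ n _ _ (Or.inr rfl)
        have s3 : E' * E' = δ • E' := TLe_sq K δ n _
        have hb : δ - c = qint δ (m+3) / qint δ (m+2) := by
          have e3 : qint δ (m+3) = δ * qint δ (m+2) - qint δ (m+1) := rfl
          rw [hc, e3]; field_simp
        have t2 : (((P * E') * E) * P) * E' = (P * E') * P := by
          calc (((P * E') * E) * P) * E' = P * (E' * (E * (P * E'))) := by
                simp only [mul_assoc]
            _ = P * (E' * (E * (E' * P))) := by rw [← s1]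
            _ = (P * ((E' * E) * E')) * P := by simp only [mul_assoc]
            _ = (P * E') * P := by rw [s2]
        have sX : E' * Q * E' = δ • (P * E') - c • ((P * E') * P) := by
          have t1 : E' * Q = P * E' - c • (((P * E') * E) * P) := by
            rw [hQdef, mul_sub, mul_smul_comm, ← mul_assoc, ← mul_assoc, s1]
          rw [t1, sub_mul, smul_mul_assoc, mul_assoc, s3, mul_smul_comm, t2]
        have hPE'Q : (P * E') * Q = E' * Q := by
          rw [← s1, mul_assoc, hPQ]
        constructor
        · rw [hE'def]
          calc E' * Q * E' * Q = (E' * Q * E') * Q := rfl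
            _ = (δ • (P * E') - c • ((P * E') * P)) * Q := by rw [sX]
            _ = δ • ((P * E') * Q) - c • (((P * E') * P) * Q) := by
                rw [sub_mul, smul_mul_assoc, smul_mul_assoc]
            _ = δ • (E' * Q) - c • (E' * Q) := by
                rw [mul_assoc (P * E'), hPQ, hPE'Q]
            _ = (δ - c) • (E' * Q) := (sub_smul δ c _).symm
            _ = (qint δ (m+1+2) / qint δ (m+1+1)) • (E' * Q) := by rw [hb]
        · rw [hE'def]
          have sQE' : Q * (P * E') = Q * E' := by rw [← mul_assoc, hQP]
          calc Q * E' * Q * E' = Q * (E' * (Q * E')) := by simp only [mul_assoc]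
            _ = Q * ((E' * Q) * E') := by rw [← mul_assoc E' Q E']
            _ = Q * (δ • (P * E') - c • ((P * E') * P)) := by rw [sX]
            _ = δ • (Q * (P * E')) - c • (Q * ((P * E') * P)) := by
                rw [mul_sub, mul_smul_comm, mul_smul_comm]
            _ = δ • (Q * E') - c • ((Q * E') * P) := by
                rw [← mul_assoc Q (P * E') P, ← mul_assoc Q P E', hQP]
            _ = δ • (Q * E') - c • (Q * E') := by
                rw [mul_assoc Q E' P, s1, ← mul_assoc Q P E', hQP]
            _ = (δ - c) • (Q * E') := (sub_smul δ c _).symm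
            _ = (qint δ (m+1+2) / qint δ (m+1+1)) • (Q * E') := by rw [hb]
      · have hE' : TLE K δ n (m+1) = 0 := by unfold TLE; rw [dif_neg h]
        rw [hE']
        simp

lemma jw_mem (K : Type*) [Field K] (δ : K) (n : ℕ) (m : ℕ) :
    jw K δ n m - 1 ∈ TwoSidedIdeal.span (Set.range (TLe K δ n)) := by
  induction m with
  | zero =>
    have : jw K δ n 0 - 1 = 0 := by show (1 : TL K δ n) - 1 = 0; simp
    rw [this]
    exact TwoSidedIdeal.zero_mem _
  | succ m ih =>
    rw [jw_succ]
    have : jw K δ n m - (qint δ (m+1) / qint δ (m+2)) •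
        (jw K δ n m * TLE K δ n m * jw K δ n m) - 1
      = (jw K δ n m - 1) - (qint δ (m+1) / qint δ (m+2)) •
        (jw K δ n m * TLE K δ n m * jw K δ n m) := sub_right_comm _ _ _
    rw [this]
    refine TwoSidedIdeal.sub_mem _ ih ?_
    by_cases h : m < n - 1
    · have hE : TLE K δ n m = TLe K δ n ⟨m, h⟩ := by unfold TLE; rw [dif_pos h]
      rw [hE, ← smul_mul_assoc, ← smul_mul_assoc]
      exact TwoSidedIdeal.mul_mem_right _ _ _
        (TwoSidedIdeal.mul_mem_left _ _ _
          (TwoSidedIdeal.subset_span (Set.mem_range_self _)))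
    · have hE : TLE K δ n m = 0 := by unfold TLE; rw [dif_neg h]
      rw [hE, mul_zero, zero_mul, smul_zero]
      exact TwoSidedIdeal.zero_mem _

/-- Wenzl's existence theorem: if the quantum integers `[2], …, [n]` are all nonzero,
then `TL_n(K, δ)` contains a Jones–Wenzl projector, i.e. an element `p` with `p - 1`
in the two-sided ideal generated by `e_1, …, e_{n-1}` and `e_i * p = p * e_i = 0`
for all `i`. -/
theorem TL_jones_wenzl_exists (K : Type*) [Field K] (δ : K) (n : ℕ) (hn : 1 ≤ n)
    (hq : ∀ k, 2 ≤ k → k ≤ n → qint δ k ≠ 0) :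
    ∃ p : TL K δ n,
      p - 1 ∈ TwoSidedIdeal.span (Set.range (TLe K δ n)) ∧
      ∀ i : Fin (n - 1), TLe K δ n i * p = 0 ∧ p * TLe K δ n i = 0 := by
  have hq' : ∀ k, 1 ≤ k → k ≤ n → qint δ k ≠ 0 := by
    intro k h1 h2
    rcases Nat.lt_or_ge k 2 with hk | hk
    · have : k = 1 := by omega
      subst this
      show qint δ 1 ≠ 0
      simp [qint]
    · exact hq k hk h2
  obtain ⟨A, _, _, _⟩ := jw_spec K δ n hn hq' (n - 1) le_rfl
  exact ⟨jw K δ n (n - 1), jw_mem K δ n (n - 1), fun i => A i i.2⟩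
end

section
/- Let R be a unital ring and let I_0 ⊆ I_1 ⊆ ⋯ ⊆ I_m = R be an increasing chain of two-sided ideals. Let (p_k)_{k=0}^{m} be elements of R satisfying: (i) ∑_{k=0}^{m} p_k = 1; (ii) p_k ∈ I_k for every k; (iii) for every k ≥ 1 and every a ∈ I_{k−1}, a * p_k = 0 and p_k * a = 0; (iv) for every k and every a ∈ I_k, both a * p_k − a and p_k * a − a lie in I_{k−1} (where I_{−1} := {0}). Fix k, and suppose e ∈ R satisfies the same three characterizing properties at level k: e ∈ I_k; a * e = 0 and e * a = 0 for all a ∈ I_{k−1}; and a * e − a ∈ I_{k−1} and e * a − a ∈ I_{k−1} for all a ∈ I_k. Then e = p_k. -/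
/-!
Write `x = e - p k`. The two fixing properties give `x = (e p_k - p_k) - (e p_k - e) ∈ I (k - 1)`.
Multiplying `1 = ∑ p j` on the left by an element of `I k` that kills `I (k - 1)` only keeps the
`j = k` term: lower `p j` lie in `I (k - 1)`, and higher `p j` kill `I k ⊆ I (j - 1)`. Hence
`e p_k = e` and `p_k p_k = p_k`, so `x = x p_k`, which vanishes because `x ∈ I (k - 1)`.
-/

section

variable {R : Type*} [Ring R] {m : ℕ} {I : ℤ → TwoSidedIdeal R} {p : ℤ → R}

theorem monotoneOn_Icc_of_le_add_one
    (hchain : ∀ k : ℤ, -1 ≤ k → k < m → I k ≤ I (k + 1)) :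
    MonotoneOn I (Set.Icc (-1) m) :=
  monotoneOn_of_le_succ Set.ordConnected_Icc fun k _ hk hk' => by
    rw [Order.succ_eq_add_one, Set.mem_Icc] at *
    exact hchain k hk.1 (by omega)

theorem proj_annihilates_lower (hneg : I (-1) = ⊥)
    (hann : ∀ k : ℤ, 1 ≤ k → k ≤ m → ∀ a ∈ I (k - 1), a * p k = 0 ∧ p k * a = 0)
    {k : ℤ} (hk0 : 0 ≤ k) (hkm : k ≤ m) {a : R} (ha : a ∈ I (k - 1)) :
    a * p k = 0 ∧ p k * a = 0 := by
  rcases hk0.eq_or_lt with rfl | hk1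
  · rw [zero_sub, hneg, TwoSidedIdeal.mem_bot] at ha
    simp [ha]
  · exact hann k hk1 hkm a ha

section

variable (hmono : MonotoneOn I (Set.Icc (-1) m))
  (hmem : ∀ k : ℤ, 0 ≤ k → k ≤ m → p k ∈ I k)
  (hann : ∀ k : ℤ, 0 ≤ k → k ≤ m → ∀ a ∈ I (k - 1), a * p k = 0)
  {k : ℤ} {x : R} (hx : x ∈ I k) (hxann : ∀ a ∈ I (k - 1), x * a = 0)
include hmono hmem hann hx hxann

theorem mul_proj_eq_zero_of_ne {j : ℤ} (hj0 : 0 ≤ j) (hjm : j ≤ m) (hk0 : 0 ≤ k) (hkm : k ≤ m)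
    (hjk : j ≠ k) : x * p j = 0 := by
  rcases hjk.lt_or_gt with hjk | hkj
  · exact hxann _ <| hmono ⟨by omega, hjm⟩ ⟨by omega, by omega⟩ (by omega) (hmem j hj0 hjm)
  · exact hann j hj0 hjm x <| hmono ⟨by omega, hkm⟩ ⟨by omega, by omega⟩ (by omega) hx

theorem mul_proj_eq_self (hsum : ∑ j ∈ Finset.Icc (0 : ℤ) m, p j = 1)
    (hk0 : 0 ≤ k) (hkm : k ≤ m) : x * p k = x := by
  calc x * p k = ∑ j ∈ Finset.Icc (0 : ℤ) m, x * p j := by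
        rw [Finset.sum_eq_single_of_mem k (Finset.mem_Icc.2 ⟨hk0, hkm⟩)]
        intro j hj hjk
        rw [Finset.mem_Icc] at hj
        exact mul_proj_eq_zero_of_ne hmono hmem hann hx hxann hj.1 hj.2 hk0 hkm hjk
    _ = x := by rw [← Finset.mul_sum, hsum, mul_one]

end

end

theorem filtered_ring_projector_unique_general {R : Type*} [Ring R]
    (m : ℕ) (I : ℤ → TwoSidedIdeal R) (p : ℤ → R)
    (hneg : I (-1) = ⊥)
    (hchain : ∀ k : ℤ, -1 ≤ k → k < m → I k ≤ I (k + 1))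
    (hsum : ∑ k ∈ Finset.Icc (0 : ℤ) m, p k = 1)
    (hmem : ∀ k : ℤ, 0 ≤ k → k ≤ m → p k ∈ I k)
    (hann : ∀ k : ℤ, 1 ≤ k → k ≤ m → ∀ a ∈ I (k - 1), a * p k = 0 ∧ p k * a = 0)
    (hfix : ∀ k : ℤ, 0 ≤ k → k ≤ m →
      ∀ a ∈ I k, a * p k - a ∈ I (k - 1) ∧ p k * a - a ∈ I (k - 1))
    (k : ℤ) (hk0 : 0 ≤ k) (hkm : k ≤ m)
    (e : R)
    (hemem : e ∈ I k)
    (heann : ∀ a ∈ I (k - 1), a * e = 0 ∧ e * a = 0)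
    (hefix : ∀ a ∈ I k, a * e - a ∈ I (k - 1) ∧ e * a - a ∈ I (k - 1)) :
    e = p k := by
  have hmono := monotoneOn_Icc_of_le_add_one hchain
  have hann₀ {j : ℤ} (hj0 : 0 ≤ j) (hjm : j ≤ m) {a : R} (ha : a ∈ I (j - 1)) :=
    proj_annihilates_lower hneg hann hj0 hjm ha
  have hleft (j : ℤ) (hj0 : 0 ≤ j) (hjm : j ≤ m) (a : R) (ha : a ∈ I (j - 1)) :
      a * p j = 0 := (hann₀ hj0 hjm ha).1
  have he : e * p k = e := mul_proj_eq_self hmono hmem hleft hemem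
    (fun a ha => (heann a ha).2) hsum hk0 hkm
  have hp : p k * p k = p k := mul_proj_eq_self hmono hmem hleft (hmem k hk0 hkm)
    (fun a ha => (hann₀ hk0 hkm ha).2) hsum hk0 hkm
  have hdiff : e - p k ∈ I (k - 1) := by
    simpa only [sub_sub_sub_cancel_left] using
      (I (k - 1)).sub_mem (hefix (p k) (hmem k hk0 hkm)).2 (hfix k hk0 hkm e hemem).1
  rw [← sub_eq_zero]
  calc e - p k = (e - p k) * p k := by rw [sub_mul, he, hp]
    _ = 0 := hleft k hk0 hkm _ hdiff

/-- Abstract uniqueness of higher order projectors.  Let `I (-1) = {0}` and let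
`I 0 ≤ I 1 ≤ ⋯ ≤ I m = R` be an increasing chain of two-sided ideals of a unital
ring `R` (indexed by integers, with the convention `I (-1) = ⊥`).  Let
`p 0, …, p m` satisfy: (i) `∑ p k = 1`; (ii) `p k ∈ I k`; (iii) for `k ≥ 1`,
every `a ∈ I (k-1)` annihilates `p k` on both sides; (iv) for every `a ∈ I k`,
both `a * p k - a` and `p k * a - a` lie in `I (k-1)`.  If `e` satisfies the same
three characterizing properties at level `k`, then `e = p k`. -/
theorem filtered_ring_projector_unique {R : Type*} [Ring R]
    (m : ℕ) (I : ℤ → TwoSidedIdeal R) (p : ℤ → R)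
    (hneg : I (-1) = ⊥)
    (hchain : ∀ k : ℤ, -1 ≤ k → k < m → I k ≤ I (k + 1))
    (htop : I m = ⊤)
    (hsum : ∑ k ∈ Finset.Icc (0 : ℤ) m, p k = 1)
    (hmem : ∀ k : ℤ, 0 ≤ k → k ≤ m → p k ∈ I k)
    (hann : ∀ k : ℤ, 1 ≤ k → k ≤ m → ∀ a ∈ I (k - 1), a * p k = 0 ∧ p k * a = 0)
    (hfix : ∀ k : ℤ, 0 ≤ k → k ≤ m →
      ∀ a ∈ I k, a * p k - a ∈ I (k - 1) ∧ p k * a - a ∈ I (k - 1))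
    (k : ℤ) (hk0 : 0 ≤ k) (hkm : k ≤ m)
    (e : R)
    (hemem : e ∈ I k)
    (heann : ∀ a ∈ I (k - 1), a * e = 0 ∧ e * a = 0)
    (hefix : ∀ a ∈ I k, a * e - a ∈ I (k - 1) ∧ e * a - a ∈ I (k - 1)) :
    e = p k :=
  filtered_ring_projector_unique_general m I p hneg hchain hsum hmem hann hfix k hk0 hkm e hemem
    heann hefix
end

section
/- Let V be an additive category with binary biproducts, let A, B, C be cochain complexes over V indexed by ℤ, and let α : A ⟶ B and β : B ⟶ C be chain maps. Assume that every chain map from the shifted complex A⟦1⟧ to C is nullhomotopic. Then any two chain maps γ₁, γ₂ : mappingCone(α) ⟶ C satisfying inr(α) ≫ γ₁ = β and inr(α) ≫ γ₂ = β are homotopic. -/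
open CategoryTheory CategoryTheory.Limits CochainComplex HomologicalComplex
open CochainComplex.HomComplex

/-- Obstruction theory, uniqueness part: if every chain map `A⟦1⟧ ⟶ C` is
nullhomotopic, then any two extensions `γ₁, γ₂ : mappingCone α ⟶ C` of a chain map
`β : B ⟶ C` over the mapping cone of `α : A ⟶ B` are homotopic. -/
theorem cone_extension_unique_up_to_homotopy
    {V : Type*} [Category V] [Preadditive V] [HasBinaryBiproducts V]
    {A B C : CochainComplex V ℤ} (α : A ⟶ B) (β : B ⟶ C)
    (hAC : ∀ f : (A⟦(1 : ℤ)⟧ : CochainComplex V ℤ) ⟶ C, Nonempty (Homotopy f 0))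
    (γ₁ γ₂ : mappingCone α ⟶ C)
    (h₁ : mappingCone.inr α ≫ γ₁ = β)
    (h₂ : mappingCone.inr α ≫ γ₂ = β) :
    Nonempty (Homotopy γ₁ γ₂) := by
  -- the difference cochain in degree -1
  set ε : Cochain A C (-1) :=
    (mappingCone.inl α).comp (Cochain.ofHom γ₁) (add_zero _) -
      (mappingCone.inl α).comp (Cochain.ofHom γ₂) (add_zero _) with hε_def
  have hε : δ (-1) 0 ε = 0 := by
    rw [hε_def, δ_sub, δ_comp_ofHom, δ_comp_ofHom, mappingCone.δ_inl,
      ← Cochain.ofHom_comp, ← Cochain.ofHom_comp, Category.assoc, Category.assoc,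
      h₁, h₂, sub_self]
  set εc : Cocycle A C (-1) := Cocycle.mk ε 0 (neg_add_cancel 1) hε with hεc_def
  set f : (A⟦(1 : ℤ)⟧ : CochainComplex V ℤ) ⟶ C :=
    Cocycle.homOf (εc.leftShift 1 0 (neg_add_cancel 1)) with hf_def
  obtain ⟨h⟩ := hAC f
  obtain ⟨z, hz⟩ := Cochain.equivHomotopy f 0 h
  have hz' : Cochain.ofHom f = δ (-1) 0 z := by
    simp at hz; exact hz
  have key : δ (-2) (-1) (-(z.leftUnshift (-2) (by omega))) = ε := by
    rw [δ_neg, Cochain.δ_leftUnshift z (-2) (by omega) (-1) 0 (by omega), ← hz',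
      hf_def, Cocycle.cochain_ofHom_homOf_eq_coe]
    have : ((εc.leftShift 1 0 (neg_add_cancel 1) : Cocycle (A⟦(1:ℤ)⟧) C 0) :
        Cochain (A⟦(1:ℤ)⟧) C 0).leftUnshift (-1) (by omega) = ε := by
      have := Cochain.leftUnshift_leftShift (εc : Cochain A C (-1)) 1 0 (neg_add_cancel 1)
      simp only [hεc_def] at this; exact this
    rw [this]
    simp
  exact ⟨mappingCone.descHomotopy α γ₁ γ₂ (-(z.leftUnshift (-2) (by omega))) 0
    (by rw [key, hε_def]; simp)
    (by simp [h₁, h₂])⟩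
end

section
/- Let V be an additive category and let A, B, C, D be cochain complexes over V indexed by ℤ. Suppose given graded maps α_n : A^n → B^n, β_n : B^n → C^n, γ_n : C^n → D^n, ρ_n : A^n → C^{n−1}, σ_n : B^n → D^{n−1}, η_n : A^n → D^{n−2}, and let T be the graded object with T^n = A^n ⊕ B^{n−1} ⊕ C^{n−2} ⊕ D^{n−3}, equipped with the lower-triangular differential whose diagonal entries are d_A, −d_B, d_C, −d_D, whose first subdiagonal entries are α, β, γ, whose second subdiagonal entries are ρ, σ, and whose bottom-left entry is η (each entry placed with the index shifts induced by the grading of T). Assume this differential squares to zero, so that T is a cochain complex. If there exist maps h_n : B^n → C^{n−1} such that β_n = d_C^{n−1} ∘ h_n + h_{n+1} ∘ d_B^n for all n, then T is isomorphic as a cochain complex to the complex T′ with the same underlying graded object and the lower-triangular differential obtained from that of T by replacing β with 0, ρ with ρ + h ∘ α, and σ with σ − γ ∘ h, all other entries unchanged. Moreover, an isomorphism T → T′ is given in each degree by the unipotent matrix that is the identity on each summand and has the single extra off-diagonal entry h from the B-summand to the C-summand. -/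
open CategoryTheory CategoryTheory.Limits

namespace Combing

variable {V : Type*} [Category V] [Preadditive V] [HasBinaryBiproducts V]

/-- The map between nested binary biproducts `(a ⊞ b) ⊞ (c ⊞ d)` determined by a
`4 × 4` matrix of components. -/
noncomputable def mat4 {a b c d a' b' c' d' : V}
    (f₁₁ : a ⟶ a') (f₁₂ : a ⟶ b') (f₁₃ : a ⟶ c') (f₁₄ : a ⟶ d')
    (f₂₁ : b ⟶ a') (f₂₂ : b ⟶ b') (f₂₃ : b ⟶ c') (f₂₄ : b ⟶ d')
    (f₃₁ : c ⟶ a') (f₃₂ : c ⟶ b') (f₃₃ : c ⟶ c') (f₃₄ : c ⟶ d')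
    (f₄₁ : d ⟶ a') (f₄₂ : d ⟶ b') (f₄₃ : d ⟶ c') (f₄₄ : d ⟶ d') :
    (a ⊞ b) ⊞ (c ⊞ d) ⟶ (a' ⊞ b') ⊞ (c' ⊞ d') :=
  biprod.desc
    (biprod.desc
      (biprod.lift (biprod.lift f₁₁ f₁₂) (biprod.lift f₁₃ f₁₄))
      (biprod.lift (biprod.lift f₂₁ f₂₂) (biprod.lift f₂₃ f₂₄)))
    (biprod.desc
      (biprod.lift (biprod.lift f₃₁ f₃₂) (biprod.lift f₃₃ f₃₄))
      (biprod.lift (biprod.lift f₄₁ f₄₂) (biprod.lift f₄₃ f₄₄)))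

variable (A B C D : CochainComplex V ℤ)

/-- The underlying graded object `T^n = A^n ⊕ B^{n-1} ⊕ C^{n-2} ⊕ D^{n-3}` of the
length-four twisted complex built from `A`, `B`, `C`, `D`. -/
noncomputable def gradedT (n : ℤ) : V := (A.X n ⊞ B.X (n - 1)) ⊞ (C.X (n - 2) ⊞ D.X (n - 3))

/-- The lower-triangular twisted differential on `gradedT`, with diagonal entries
`d_A, −d_B, d_C, −d_D`, first subdiagonal entries `α, β, γ`, second subdiagonal
entries `ρ, σ` and bottom-left entry `η` (each placed with the index shifts induced
by the grading). -/
noncomputable def twDiff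
    (α : ∀ n : ℤ, A.X n ⟶ B.X n) (β : ∀ n : ℤ, B.X n ⟶ C.X n)
    (γ : ∀ n : ℤ, C.X n ⟶ D.X n)
    (ρ : ∀ n : ℤ, A.X n ⟶ C.X (n - 1)) (σ : ∀ n : ℤ, B.X n ⟶ D.X (n - 1))
    (η : ∀ n : ℤ, A.X n ⟶ D.X (n - 2)) (n : ℤ) :
    gradedT A B C D n ⟶ gradedT A B C D (n + 1) :=
  mat4
    (A.d n (n + 1))
    (α n ≫ eqToHom (congrArg B.X (by omega : n = n + 1 - 1)))
    (ρ n ≫ eqToHom (congrArg C.X (by omega : n - 1 = n + 1 - 2)))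
    (η n ≫ eqToHom (congrArg D.X (by omega : n - 2 = n + 1 - 3)))
    0
    (-(B.d (n - 1) (n + 1 - 1)))
    (β (n - 1) ≫ eqToHom (congrArg C.X (by omega : n - 1 = n + 1 - 2)))
    (σ (n - 1) ≫ eqToHom (congrArg D.X (by omega : n - 1 - 1 = n + 1 - 3)))
    0 0
    (C.d (n - 2) (n + 1 - 2))
    (γ (n - 2) ≫ eqToHom (congrArg D.X (by omega : n - 2 = n + 1 - 3)))
    0 0 0
    (-(D.d (n - 3) (n + 1 - 3)))

/-- The unipotent degree-zero endomorphism of `gradedT` which is the identity on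
each summand and has a single extra off-diagonal entry `h` from the `B`-summand to
the `C`-summand. -/
noncomputable def unipotent (h : ∀ n : ℤ, B.X n ⟶ C.X (n - 1)) (n : ℤ) :
    gradedT A B C D n ⟶ gradedT A B C D n :=
  mat4
    (𝟙 _) 0 0 0
    0 (𝟙 _) (h (n - 1) ≫ eqToHom (congrArg C.X (by omega : n - 1 - 1 = n - 2))) 0
    0 0 (𝟙 _) 0
    0 0 0 (𝟙 _)

end Combing

/-!
Conjugating the twisted differential by the unipotent automorphism `u = 1 + h` (with `h` in the
`B → C` slot) subtracts the `Hom`-complex boundary `d_C h + h d_B` from `β` and adds the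
correction terms `h α` to `ρ` and `-γ h` to `σ`; all other entries are unchanged because the
differential is lower triangular. Since `u` is invertible (with inverse `1 - h`), it transports
`d² = 0` to the new differential and is an isomorphism of cochain complexes.
-/

open CategoryTheory CategoryTheory.Limits

namespace CochainComplex

variable {V : Type*} [Category V] [HasZeroMorphisms V] {ι : Type*}

lemma d_comp_d_of_iso [Add ι] [One ι] {X Y : ι → V}
    {dX : ∀ n, X n ⟶ X (n + 1)} {dY : ∀ n, Y n ⟶ Y (n + 1)} (e : ∀ n, X n ≅ Y n)
    (comm : ∀ n, (e n).hom ≫ dY n = dX n ≫ (e (n + 1)).hom)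
    (sqX : ∀ n, dX n ≫ dX (n + 1) = 0) (n : ι) :
    dY n ≫ dY (n + 1) = 0 := by
  have conj : ∀ n, dY n = (e n).inv ≫ dX n ≫ (e (n + 1)).hom := fun n => by
    rw [← comm, Iso.inv_hom_id_assoc]
  simp [conj, reassoc_of% (sqX n)]

def ofIso [AddRightCancelSemigroup ι] [One ι] [DecidableEq ι] {X Y : ι → V}
    {dX : ∀ n, X n ⟶ X (n + 1)} {dY : ∀ n, Y n ⟶ Y (n + 1)}
    {sqX : ∀ n, dX n ≫ dX (n + 1) = 0} {sqY : ∀ n, dY n ≫ dY (n + 1) = 0}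
    (e : ∀ n, X n ≅ Y n) (comm : ∀ n, (e n).hom ≫ dY n = dX n ≫ (e (n + 1)).hom) :
    of X dX sqX ≅ of Y dY sqY :=
  HomologicalComplex.Hom.isoOfComponents e (by rintro i j (rfl : i + 1 = j); simpa using comm i)

end CochainComplex

namespace Combing

section Cast

variable {V : Type*} [Category V] [HasZeroMorphisms V] {ι : Type*} {c : ComplexShape ι}
  (X : HomologicalComplex V c)

lemma eqToHom_comp_d {i i' j : ι} (e : i = i') :
    eqToHom (congrArg X.X e) ≫ X.d i' j = X.d i j := by
  subst e; simp

lemma d_comp_eqToHom {i j j' : ι} (e : j = j') :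
    X.d i j ≫ eqToHom (congrArg X.X e) = X.d i j' := by
  subst e; simp

end Cast

variable {V : Type*} [Category V] [Preadditive V] [HasBinaryBiproducts V]

section Matrix

variable {a b c d a' b' c' d' a'' b'' c'' d'' : V}

lemma mat4_comp
    (f₁₁ : a ⟶ a') (f₁₂ : a ⟶ b') (f₁₃ : a ⟶ c') (f₁₄ : a ⟶ d')
    (f₂₁ : b ⟶ a') (f₂₂ : b ⟶ b') (f₂₃ : b ⟶ c') (f₂₄ : b ⟶ d')
    (f₃₁ : c ⟶ a') (f₃₂ : c ⟶ b') (f₃₃ : c ⟶ c') (f₃₄ : c ⟶ d')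
    (f₄₁ : d ⟶ a') (f₄₂ : d ⟶ b') (f₄₃ : d ⟶ c') (f₄₄ : d ⟶ d')
    (g₁₁ : a' ⟶ a'') (g₁₂ : a' ⟶ b'') (g₁₃ : a' ⟶ c'') (g₁₄ : a' ⟶ d'')
    (g₂₁ : b' ⟶ a'') (g₂₂ : b' ⟶ b'') (g₂₃ : b' ⟶ c'') (g₂₄ : b' ⟶ d'')
    (g₃₁ : c' ⟶ a'') (g₃₂ : c' ⟶ b'') (g₃₃ : c' ⟶ c'') (g₃₄ : c' ⟶ d'')
    (g₄₁ : d' ⟶ a'') (g₄₂ : d' ⟶ b'') (g₄₃ : d' ⟶ c'') (g₄₄ : d' ⟶ d'') :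
    mat4 f₁₁ f₁₂ f₁₃ f₁₄ f₂₁ f₂₂ f₂₃ f₂₄ f₃₁ f₃₂ f₃₃ f₃₄ f₄₁ f₄₂ f₄₃ f₄₄ ≫
      mat4 g₁₁ g₁₂ g₁₃ g₁₄ g₂₁ g₂₂ g₂₃ g₂₄ g₃₁ g₃₂ g₃₃ g₃₄ g₄₁ g₄₂ g₄₃ g₄₄ =
    mat4
      (f₁₁ ≫ g₁₁ + f₁₂ ≫ g₂₁ + f₁₃ ≫ g₃₁ + f₁₄ ≫ g₄₁)
      (f₁₁ ≫ g₁₂ + f₁₂ ≫ g₂₂ + f₁₃ ≫ g₃₂ + f₁₄ ≫ g₄₂)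
      (f₁₁ ≫ g₁₃ + f₁₂ ≫ g₂₃ + f₁₃ ≫ g₃₃ + f₁₄ ≫ g₄₃)
      (f₁₁ ≫ g₁₄ + f₁₂ ≫ g₂₄ + f₁₃ ≫ g₃₄ + f₁₄ ≫ g₄₄)
      (f₂₁ ≫ g₁₁ + f₂₂ ≫ g₂₁ + f₂₃ ≫ g₃₁ + f₂₄ ≫ g₄₁)
      (f₂₁ ≫ g₁₂ + f₂₂ ≫ g₂₂ + f₂₃ ≫ g₃₂ + f₂₄ ≫ g₄₂)
      (f₂₁ ≫ g₁₃ + f₂₂ ≫ g₂₃ + f₂₃ ≫ g₃₃ + f₂₄ ≫ g₄₃)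
      (f₂₁ ≫ g₁₄ + f₂₂ ≫ g₂₄ + f₂₃ ≫ g₃₄ + f₂₄ ≫ g₄₄)
      (f₃₁ ≫ g₁₁ + f₃₂ ≫ g₂₁ + f₃₃ ≫ g₃₁ + f₃₄ ≫ g₄₁)
      (f₃₁ ≫ g₁₂ + f₃₂ ≫ g₂₂ + f₃₃ ≫ g₃₂ + f₃₄ ≫ g₄₂)
      (f₃₁ ≫ g₁₃ + f₃₂ ≫ g₂₃ + f₃₃ ≫ g₃₃ + f₃₄ ≫ g₄₃)
      (f₃₁ ≫ g₁₄ + f₃₂ ≫ g₂₄ + f₃₃ ≫ g₃₄ + f₃₄ ≫ g₄₄)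
      (f₄₁ ≫ g₁₁ + f₄₂ ≫ g₂₁ + f₄₃ ≫ g₃₁ + f₄₄ ≫ g₄₁)
      (f₄₁ ≫ g₁₂ + f₄₂ ≫ g₂₂ + f₄₃ ≫ g₃₂ + f₄₄ ≫ g₄₂)
      (f₄₁ ≫ g₁₃ + f₄₂ ≫ g₂₃ + f₄₃ ≫ g₃₃ + f₄₄ ≫ g₄₃)
      (f₄₁ ≫ g₁₄ + f₄₂ ≫ g₂₄ + f₄₃ ≫ g₃₄ + f₄₄ ≫ g₄₄) := by
  ext <;> simp [mat4] <;> abel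

lemma mat4_id :
    mat4 (𝟙 a) 0 0 0 0 (𝟙 b) 0 0 0 0 (𝟙 c) 0 0 0 0 (𝟙 d) = 𝟙 ((a ⊞ b) ⊞ (c ⊞ d)) := by
  ext <;> simp [mat4]

end Matrix

variable (A B C D : CochainComplex V ℤ)

lemma unipotent_comp_unipotent (h h' : ∀ n : ℤ, B.X n ⟶ C.X (n - 1)) (n : ℤ) :
    unipotent A B C D h n ≫ unipotent A B C D h' n = unipotent A B C D (h + h') n := by
  simp only [unipotent, gradedT, mat4_comp]
  congr 1 <;> simp; abel

lemma unipotent_zero (n : ℤ) : unipotent A B C D 0 n = 𝟙 _ := by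
  simp only [unipotent, Pi.zero_apply, zero_comp]
  exact mat4_id

noncomputable def unipotentIso (h : ∀ n : ℤ, B.X n ⟶ C.X (n - 1)) (n : ℤ) :
    gradedT A B C D n ≅ gradedT A B C D n where
  hom := unipotent A B C D h n
  inv := unipotent A B C D (-h) n
  hom_inv_id := by rw [unipotent_comp_unipotent, add_neg_cancel, unipotent_zero]
  inv_hom_id := by rw [unipotent_comp_unipotent, neg_add_cancel, unipotent_zero]

lemma unipotent_comp_twDiff
    (α : ∀ n : ℤ, A.X n ⟶ B.X n) (β β' : ∀ n : ℤ, B.X n ⟶ C.X n)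
    (γ : ∀ n : ℤ, C.X n ⟶ D.X n)
    (ρ : ∀ n : ℤ, A.X n ⟶ C.X (n - 1)) (σ : ∀ n : ℤ, B.X n ⟶ D.X (n - 1))
    (η : ∀ n : ℤ, A.X n ⟶ D.X (n - 2)) (h : ∀ n : ℤ, B.X n ⟶ C.X (n - 1))
    (hβ : ∀ n : ℤ, β n = β' n + (h n ≫ C.d (n - 1) n +
      B.d n (n + 1) ≫ h (n + 1) ≫ eqToHom (congrArg C.X (add_sub_cancel_right n 1))))
    (n : ℤ) :
    unipotent A B C D h n ≫ twDiff A B C D α β' γ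
        (fun n => ρ n + α n ≫ h n) (fun n => σ n - h n ≫ γ (n - 1)) η n =
      twDiff A B C D α β γ ρ σ η n ≫ unipotent A B C D h (n + 1) := by
  simp only [unipotent, twDiff, gradedT, mat4_comp]
  congr 1 <;>
    simp only [Category.comp_id, Category.id_comp, comp_zero, zero_comp,
      add_zero, zero_add, sub_zero, neg_zero, Preadditive.comp_add, Preadditive.add_comp,
      Preadditive.comp_sub, Preadditive.sub_comp, Preadditive.comp_neg,
      Preadditive.neg_comp, Category.assoc]
  case e_f₁₃ =>
    rw [← eqToHom_naturality_assoc (f := B.X) (g := fun m => C.X (m - 1)) h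
      (show n = n + 1 - 1 by omega), eqToHom_trans]
    exact add_comm _ _
  case e_f₂₄ =>
    rw [← eqToHom_naturality_assoc (f := C.X) (g := D.X) γ
      (show n - 1 - 1 = n - 2 by omega), eqToHom_trans, sub_add_cancel]
  case e_f₂₃ =>
    rw [hβ (n - 1), ← d_comp_eqToHom B (show n + 1 - 1 = n - 1 + 1 by omega), Category.assoc,
      ← eqToHom_naturality_assoc (f := B.X) (g := fun m => C.X (m - 1)) h
        (show n + 1 - 1 = n - 1 + 1 by omega)]
    simp (disch := omega) only [eqToHom_comp_d, d_comp_eqToHom, eqToHom_trans,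
      Preadditive.add_comp, Category.assoc]
    abel

end Combing

open Combing in
/-- The Combing Lemma for a length-four twisted complex of cochain complexes: if the
component `β` of the twisted differential is a boundary in the `Hom`-complex, i.e.
`β_n = d_C ∘ h_n + h_{n+1} ∘ d_B` for some degree `−1` maps `h_n : B^n → C^{n−1}`,
then the twisted complex `T` is isomorphic as a cochain complex to the twisted
complex `T'` obtained by replacing `β` with `0`, `ρ` with `ρ + h ∘ α` and `σ` with
`σ − γ ∘ h`; moreover an isomorphism `T ≅ T'` is given in each degree by the
unipotent matrix with the single extra entry `h` from the `B`-summand to the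
`C`-summand. -/
theorem combing_lemma {V : Type*} [Category V] [Preadditive V] [HasBinaryBiproducts V]
    (A B C D : CochainComplex V ℤ)
    (α : ∀ n : ℤ, A.X n ⟶ B.X n) (β : ∀ n : ℤ, B.X n ⟶ C.X n)
    (γ : ∀ n : ℤ, C.X n ⟶ D.X n)
    (ρ : ∀ n : ℤ, A.X n ⟶ C.X (n - 1)) (σ : ∀ n : ℤ, B.X n ⟶ D.X (n - 1))
    (η : ∀ n : ℤ, A.X n ⟶ D.X (n - 2))
    (hsq : ∀ n : ℤ, twDiff A B C D α β γ ρ σ η n ≫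
      twDiff A B C D α β γ ρ σ η (n + 1) = 0)
    (h : ∀ n : ℤ, B.X n ⟶ C.X (n - 1))
    (hβ : ∀ n : ℤ, β n = h n ≫ C.d (n - 1) n +
      B.d n (n + 1) ≫ h (n + 1) ≫ eqToHom (congrArg C.X (by omega : n + 1 - 1 = n))) :
    ∃ hsq' : ∀ n : ℤ, twDiff A B C D α (fun _ => 0) γ
        (fun n => ρ n + α n ≫ h n) (fun n => σ n - h n ≫ γ (n - 1)) η n ≫
        twDiff A B C D α (fun _ => 0) γ
        (fun n => ρ n + α n ≫ h n) (fun n => σ n - h n ≫ γ (n - 1)) η (n + 1) = 0,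
      ∃ e : CochainComplex.of (gradedT A B C D)
            (twDiff A B C D α β γ ρ σ η) hsq ≅
          CochainComplex.of (gradedT A B C D)
            (twDiff A B C D α (fun _ => 0) γ
              (fun n => ρ n + α n ≫ h n) (fun n => σ n - h n ≫ γ (n - 1)) η) hsq',
        ∀ n : ℤ, e.hom.f n = unipotent A B C D h n := by
  have comm := unipotent_comp_twDiff A B C D α β (fun _ => 0) γ ρ σ η h
    (fun n => by rw [hβ n, zero_add])
  exact ⟨CochainComplex.d_comp_d_of_iso (unipotentIso A B C D h) comm hsq,
    CochainComplex.ofIso (unipotentIso A B C D h) comm, fun _ => rfl⟩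
end
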